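/- Let A ∈ ℝ, let J(z) be the 5×5 matrix with rows (0, 0, 0, 2z₁, 12z₄), (0, 0, 1, 0, 0), (0, −1, 0, 0, −2z₁), (−2z₁, 0, 0, 0, −8z₁z₂ + 2z₅), (−12z₄, 0, 2z₁, 8z₁z₂ − 2z₅, 0), and let F₁(z) = (1/2)A z₁ + (1/6) z₅ + 8A z₂² + (1/2) z₃² + (2/3) z₁ z₂ + (16/3) z₂³ and F₂(z) = 9A² z₁² + z₅² + 6A z₁ z₅ − 2 z₁³ − 24A z₁² z₂ − 12 z₁ z₃ z₄ + 24 z₂ z₄² − 16 z₁² z₂². Then F₁ and F₂ are in involution: {F₁,F₂}(z) = ⟨∇F₁(z), J(z)∇F₂(z)⟩ = 0 for all z ∈ ℝ⁵. -/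

import Mathlib

/-! Both functions are polynomials, so their gradients can be written down explicitly and
certified with the product and power rules for `HasFDerivAt`. Substituting them, together with
`J(z)`, into `⟨∇F₁, J ∇F₂⟩` leaves a polynomial identity in `A` and `z`, which `ring` checks. -/

/-- The Poisson matrix of the five-dimensional system (8). Coordinates:
z 0 = z₁, z 1 = z₂, z 2 = z₃, z 3 = z₄, z 4 = z₅. -/
def poissonJ (z : Fin 5 → ℝ) : Matrix (Fin 5) (Fin 5) ℝ :=
  !![0, 0, 0, 2 * z 0, 12 * z 3;
     0, 0, 1, 0, 0;
     0, -1, 0, 0, -2 * z 0;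
     -2 * z 0, 0, 0, 0, -8 * z 0 * z 1 + 2 * z 4;
     -12 * z 3, 0, 2 * z 0, 8 * z 0 * z 1 - 2 * z 4, 0]

/-- Gradient of a scalar function on ℝ⁵. -/
noncomputable def grad5 (F : (Fin 5 → ℝ) → ℝ) (z : Fin 5 → ℝ) : Fin 5 → ℝ :=
  fun i => fderiv ℝ F z (Pi.single i 1)

/-- The Hamiltonian F₁ of the five-dimensional system (8). -/
noncomputable def F₁ (A : ℝ) (z : Fin 5 → ℝ) : ℝ :=
  (1/2) * A * z 0 + (1/6) * z 4 + 8 * A * (z 1)^2 + (1/2) * (z 2)^2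
    + (2/3) * z 0 * z 1 + (16/3) * (z 1)^3

/-- The second constant of motion F₂ of the five-dimensional system (8). -/
noncomputable def F₂ (A : ℝ) (z : Fin 5 → ℝ) : ℝ :=
  9 * A^2 * (z 0)^2 + (z 4)^2 + 6 * A * z 0 * z 4 - 2 * (z 0)^3
    - 24 * A * (z 0)^2 * z 1 - 12 * z 0 * z 2 * z 3 + 24 * z 1 * (z 3)^2
    - 16 * (z 0)^2 * (z 1)^2

local notation "dz" i:max => (ContinuousLinearMap.proj i : (Fin 5 → ℝ) →L[ℝ] ℝ)

noncomputable def gradF₁ (A : ℝ) (z : Fin 5 → ℝ) : Fin 5 → ℝ :=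
  ![(1/2) * A + (2/3) * z 1, 16 * A * z 1 + (2/3) * z 0 + 16 * z 1 ^ 2, z 2, 0, 1/6]

noncomputable def gradF₂ (A : ℝ) (z : Fin 5 → ℝ) : Fin 5 → ℝ :=
  ![18 * A ^ 2 * z 0 + 6 * A * z 4 - 6 * z 0 ^ 2 - 48 * A * z 0 * z 1 - 12 * z 2 * z 3
      - 32 * z 0 * z 1 ^ 2,
    -24 * A * z 0 ^ 2 + 24 * z 3 ^ 2 - 32 * z 0 ^ 2 * z 1,
    -12 * z 0 * z 3,
    -12 * z 0 * z 2 + 48 * z 1 * z 3,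
    2 * z 4 + 6 * A * z 0]

theorem grad5_eq_of_hasFDerivAt {F : (Fin 5 → ℝ) → ℝ} {g z : Fin 5 → ℝ}
    (hF : HasFDerivAt F (∑ i, g i • dz i) z) : grad5 F z = g := by
  funext i
  simp [grad5, hF.fderiv, Pi.single_apply]

theorem hasFDerivAt_F₁ (A : ℝ) (z : Fin 5 → ℝ) :
    HasFDerivAt (F₁ A) (∑ i, gradF₁ A z i • dz i) z := by
  have h (i : Fin 5) : HasFDerivAt (fun z : Fin 5 → ℝ => z i) (dz i) z :=
    hasFDerivAt_apply i z
  have hF : HasFDerivAt (F₁ A) _ z :=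
    ((((((h 0).const_mul (1/2*A)).add ((h 4).const_mul (1/6))).add
      (((h 1).pow 2).const_mul (8*A))).add (((h 2).pow 2).const_mul (1/2))).add
      (((h 0).const_mul (2/3)).mul (h 1))).add (((h 1).pow 3).const_mul (16/3))
  refine hF.congr_fderiv (ContinuousLinearMap.ext fun v => ?_)
  simp only [gradF₁, Fin.sum_univ_five, Matrix.cons_val_zero, Matrix.cons_val_one, Matrix.cons_val,
    add_apply, smul_apply, ContinuousLinearMap.proj_apply, smul_eq_mul, nsmul_eq_mul]
  ring

theorem hasFDerivAt_F₂ (A : ℝ) (z : Fin 5 → ℝ) :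
    HasFDerivAt (F₂ A) (∑ i, gradF₂ A z i • dz i) z := by
  have h (i : Fin 5) : HasFDerivAt (fun z : Fin 5 → ℝ => z i) (dz i) z :=
    hasFDerivAt_apply i z
  have hF : HasFDerivAt (F₂ A) _ z :=
    (((((((((h 0).pow 2).const_mul (9*A^2)).add ((h 4).pow 2)).add
      (((h 0).const_mul (6*A)).mul (h 4))).sub (((h 0).pow 3).const_mul 2)).sub
      ((((h 0).pow 2).const_mul (24*A)).mul (h 1))).sub
      ((((h 0).const_mul 12).mul (h 2)).mul (h 3))).add
      (((h 1).const_mul 24).mul ((h 3).pow 2))).sub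
      ((((h 0).pow 2).const_mul 16).mul ((h 1).pow 2))
  refine hF.congr_fderiv (ContinuousLinearMap.ext fun v => ?_)
  simp only [gradF₂, Fin.sum_univ_five, Matrix.cons_val_zero, Matrix.cons_val_one, Matrix.cons_val,
    add_apply, sub_apply, smul_apply, ContinuousLinearMap.proj_apply, Pi.mul_apply, smul_eq_mul,
    nsmul_eq_mul]
  ring

/-- F₁ and F₂ are in involution: {F₁,F₂} = ⟨∇F₁, J ∇F₂⟩ = 0. -/
theorem F1_F2_in_involution (A : ℝ) (z : Fin 5 → ℝ) :
    ∑ i : Fin 5, grad5 (F₁ A) z i * (poissonJ z).mulVec (grad5 (F₂ A) z) i = 0 := by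
  rw [grad5_eq_of_hasFDerivAt (hasFDerivAt_F₁ A z), grad5_eq_of_hasFDerivAt (hasFDerivAt_F₂ A z)]
  simp only [Matrix.mulVec, dotProduct, poissonJ, gradF₁, gradF₂, Fin.sum_univ_five,
    Matrix.of_apply, Matrix.cons_val', Matrix.cons_val_fin_one, Matrix.cons_val_zero,
    Matrix.cons_val_one, Matrix.cons_val]
  ring
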